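/- arXiv:1301.2725 — 5 statements merged into one kernel-verified Lean document; each statement's English description precedes it below -/
import Mathlib

section
/- Let n, n1, p, k be positive integers with k ≥ 1, n1 ≥ 1 and p ≥ 2k. Let β* ∈ ℝ^p be a vector whose support Λ* has exactly k elements, let X^A ∈ ℝ^{n×p}, e ∈ ℝ^n, and y^A = X^A β* + e. Let f : ℝ^{n+n1} → ℝ and h : ℝ^p → ℝ be convex functions satisfying the SCO Condition. Then there exist a corrupted block X^O ∈ ℝ^{n1×p} and y^O ∈ ℝ^{n1} such that, writing X = [X^A; X^O] ∈ ℝ^{(n+n1)×p} (rows of X^A on top) and y = [y^A; y^O] ∈ ℝ^{n+n1}, there exists β̂ ∈ ℝ^p with h(β̂) = h(β*), with support(β̂) disjoint from Λ*, and with f(y − X β̂) < f(y − X β̃) for every β̃ ∈ ℝ^p whose support is contained in Λ*. Consequently, for every R ≥ h(β*), no minimizer of f(y − Xβ) subject to h(β) ≤ R is supported on Λ*. -/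
/-!
The adversary permutes the coordinates of `β*` so that its support `Λ*` moves to a disjoint set;
the permuted vector `β̂` has `h(β̂) = h(β*)` by permutation invariance. Every corrupted row is
`t β̂` with response `t ‖β̂‖²`, so the corrupted residual of `β̂` vanishes, while every `β̃`
supported on `Λ*` is orthogonal to `β̂` and leaves the constant corrupted residual `t ‖β̂‖²`.
By SCO (i) and (ii) this constant, taken large, pushes `f` above `f(y − X β̂)` whatever the
authentic residual.
-/

/-- The regResidual `y − X β` of the stacked regression problem, where the rows are the `n`
authentic rows `(X^A, y^A)` (with `y^A = X^A β* + e`) followed by the `n1` corrupted rows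
`(X^O, y^O)`. -/
def regResidual (n n1 p : ℕ) (XA : Fin n → Fin p → ℝ) (e : Fin n → ℝ) (βstar : Fin p → ℝ)
    (XO : Fin n1 → Fin p → ℝ) (yO : Fin n1 → ℝ) (β : Fin p → ℝ) : Fin n ⊕ Fin n1 → ℝ :=
  fun r =>
    Sum.elim (fun i => (∑ j, XA i j * βstar j) + e i) yO r -
      ∑ j, Sum.elim XA XO r j * β j

open Finset Filter

theorem Finset.exists_perm_forall_mem_imp_not_mem {α : Type*} [Fintype α] [DecidableEq α]
    (s : Finset α) (hs : 2 * #s ≤ Fintype.card α) :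
    ∃ π : Equiv.Perm α, ∀ j, π j ∈ s → j ∉ s := by
  obtain ⟨t, hts, hcard⟩ := exists_subset_card_eq (s := sᶜ) (n := #s)
    (by rw [card_compl]; omega)
  let e : {j // j ∈ t} ≃ {j // j ∈ s} := t.equivOfCardEq hcard
  refine ⟨e.extendSubtype, fun j hj hjs => ?_⟩
  have hjt : j ∈ t := by_contra fun hjt => e.extendSubtype_not_mem j hjt hj
  exact mem_compl.mp (hts hjt) hjs

theorem dotProduct_self_pos {ι R : Type*} [Fintype ι] [Ring R] [LinearOrder R]
    [IsStrictOrderedRing R] {v : ι → R} (hv : v ≠ 0) : 0 < v ⬝ᵥ v :=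
  (Fintype.sum_nonneg fun i => mul_self_nonneg (v i)).lt_of_ne'
    (dotProduct_self_eq_zero.not.mpr hv)

theorem dotProduct_eq_zero_of_forall_ne_zero {ι R : Type*} [Fintype ι]
    [NonUnitalNonAssocSemiring R] {v w : ι → R} (h : ∀ j, v j ≠ 0 → w j = 0) : v ⬝ᵥ w = 0 :=
  sum_eq_zero fun j _ => by
    by_cases hv : v j = 0
    · rw [hv, zero_mul]
    · rw [h j hv, mul_zero]

theorem exists_forall_lt_apply_sumElim_const {ι κ : Type*} [Nonempty κ]
    {f : (ι ⊕ κ → ℝ) → ℝ}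
    (hf : ∀ v : ι ⊕ κ → ℝ, v ≠ 0 → Tendsto (fun α : ℝ => f (α • v)) atTop atTop)
    (hf_mono : ∀ (v1 : ι → ℝ) (v2 : κ → ℝ), f (Sum.elim 0 v2) ≤ f (Sum.elim v1 v2)) (M : ℝ) :
    ∃ α : ℝ, ∀ u : ι → ℝ, M < f (Sum.elim u fun _ => α) := by
  have hv : (Sum.elim 0 1 : ι ⊕ κ → ℝ) ≠ 0 := fun h0 => by
    simpa using congrFun h0 (Sum.inr (Classical.arbitrary κ))
  obtain ⟨α, hα⟩ := ((hf _ hv).eventually_gt_atTop M).exists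
  have hαv : α • (Sum.elim 0 1 : ι ⊕ κ → ℝ) = Sum.elim (0 : ι → ℝ) fun _ => α := by
    ext (i | i) <;> simp
  exact ⟨α, fun u => (hαv ▸ hα).trans_le (hf_mono u _)⟩

theorem regResidual_smul_rows (n n1 p : ℕ) (XA : Fin n → Fin p → ℝ) (e : Fin n → ℝ)
    (βstar b : Fin p → ℝ) (t : ℝ) (β : Fin p → ℝ) :
    regResidual n n1 p XA e βstar (fun _ => t • b) (fun _ => t * (b ⬝ᵥ b)) β =
      Sum.elim (fun i => XA i ⬝ᵥ βstar + e i - XA i ⬝ᵥ β) fun _ => t * (b ⬝ᵥ b - b ⬝ᵥ β) := by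
  ext (i | i)
  · rfl
  · simp only [regResidual, Sum.elim_inr, mul_sub, dotProduct, Pi.smul_apply, smul_eq_mul,
      mul_sum, mul_assoc]

theorem stmt_0_general (n n1 p k : ℕ) (hn1 : 1 ≤ n1) (hk : 1 ≤ k) (hp : 2 * k ≤ p)
    (βstar : Fin p → ℝ) (hsupp : (Finset.univ.filter fun j => βstar j ≠ 0).card = k)
    (XA : Fin n → Fin p → ℝ) (e : Fin n → ℝ)
    (f : (Fin n ⊕ Fin n1 → ℝ) → ℝ) (h : (Fin p → ℝ) → ℝ)
    -- SCO condition, part (i): `f(αv) → ∞` as `α → ∞`, for every `v ≠ 0`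
    (hSCO1 : ∀ v : Fin n ⊕ Fin n1 → ℝ, v ≠ 0 →
      Filter.Tendsto (fun α : ℝ => f (α • v)) Filter.atTop Filter.atTop)
    -- SCO condition, part (ii): `f([v1; v2]) ≥ f([0; v2])`
    (hSCO2 : ∀ (v1 : Fin n → ℝ) (v2 : Fin n1 → ℝ), f (Sum.elim 0 v2) ≤ f (Sum.elim v1 v2))
    -- SCO condition, part (iii): `h` is invariant under permutations of coordinates
    (hSCO3 : ∀ (π : Equiv.Perm (Fin p)) (β : Fin p → ℝ), h (β ∘ π) = h β) :
    ∃ (XO : Fin n1 → Fin p → ℝ) (yO : Fin n1 → ℝ) (βhat : Fin p → ℝ),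
      h βhat = h βstar ∧
      (∀ j, βhat j ≠ 0 → βstar j = 0) ∧
      (∀ βtilde : Fin p → ℝ, (∀ j, βtilde j ≠ 0 → βstar j ≠ 0) →
        f (regResidual n n1 p XA e βstar XO yO βhat) <
          f (regResidual n n1 p XA e βstar XO yO βtilde)) ∧
      (∀ R : ℝ, h βstar ≤ R →
        ∀ βtilde : Fin p → ℝ, (∀ j, βtilde j ≠ 0 → βstar j ≠ 0) → h βtilde ≤ R →
          ¬ IsMinOn (fun β => f (regResidual n n1 p XA e βstar XO yO β))
              {β | h β ≤ R} βtilde) := by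
  obtain ⟨π, hπ⟩ := exists_perm_forall_mem_imp_not_mem (univ.filter fun j => βstar j ≠ 0)
    (by rw [hsupp, Fintype.card_fin]; exact hp)
  set βhat := βstar ∘ π
  have hβhat_supp : ∀ j, βhat j ≠ 0 → βstar j = 0 := fun j hj => by
    simpa using hπ j (by simpa [βhat] using hj)
  obtain ⟨j₀, hj₀⟩ := card_pos.mp (hsupp ▸ hk : 0 < #(univ.filter fun j => βstar j ≠ 0))
  have hc : 0 < βhat ⬝ᵥ βhat := dotProduct_self_pos fun h0 =>
    (mem_filter.mp hj₀).2 (by simpa [βhat] using congrFun h0 (π.symm j₀))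
  have : Nonempty (Fin n1) := ⟨⟨0, hn1⟩⟩
  obtain ⟨α, hα⟩ := exists_forall_lt_apply_sumElim_const hSCO1 hSCO2
    (f (Sum.elim (fun i => XA i ⬝ᵥ βstar + e i - XA i ⬝ᵥ βhat) fun _ => 0))
  obtain ⟨t, ht⟩ : ∃ t, t * (βhat ⬝ᵥ βhat) = α := ⟨α / (βhat ⬝ᵥ βhat), div_mul_cancel₀ α hc.ne'⟩
  let res := regResidual n n1 p XA e βstar (fun _ => t • βhat) fun _ => t * (βhat ⬝ᵥ βhat)
  have hmain : ∀ βtilde : Fin p → ℝ, (∀ j, βtilde j ≠ 0 → βstar j ≠ 0) →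
      f (res βhat) < f (res βtilde) := fun βtilde hβtilde => by
    have horth : βhat ⬝ᵥ βtilde = 0 := dotProduct_eq_zero_of_forall_ne_zero fun j hj =>
      by_contra fun hβt => hβtilde j hβt (hβhat_supp j hj)
    simp only [res, regResidual_smul_rows]
    rw [horth, sub_self, sub_zero, mul_zero, ht]
    exact hα _
  refine ⟨_, _, βhat, hSCO3 π βstar, hβhat_supp, hmain, ?_⟩
  intro R hR βtilde hβtilde _ hmin
  exact (hmain βtilde hβtilde).not_ge (hmin (show h βhat ≤ R from (hSCO3 π βstar).trans_le hR))

/-- failure of the convex optimization approach.  If `f, h` are convex and satisfy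
the SCO condition, then the adversary can choose a corrupted block `(X^O, y^O)` so that some
`β̂` whose support is disjoint from the support `Λ*` of `β*` and with `h(β̂) = h(β*)` strictly
beats every vector supported on `Λ*`; consequently for every radius `R ≥ h(β*)` no minimizer of
`f(y − Xβ)` over `{h(β) ≤ R}` is supported on `Λ*`. -/
theorem stmt_0 (n n1 p k : ℕ) (hn : 0 < n) (hn1 : 1 ≤ n1) (hk : 1 ≤ k) (hp : 2 * k ≤ p)
    (βstar : Fin p → ℝ) (hsupp : (Finset.univ.filter fun j => βstar j ≠ 0).card = k)
    (XA : Fin n → Fin p → ℝ) (e : Fin n → ℝ)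
    (f : (Fin n ⊕ Fin n1 → ℝ) → ℝ) (h : (Fin p → ℝ) → ℝ)
    (hfconv : ConvexOn ℝ Set.univ f) (hhconv : ConvexOn ℝ Set.univ h)
    -- SCO condition, part (i): `f(αv) → ∞` as `α → ∞`, for every `v ≠ 0`
    (hSCO1 : ∀ v : Fin n ⊕ Fin n1 → ℝ, v ≠ 0 →
      Filter.Tendsto (fun α : ℝ => f (α • v)) Filter.atTop Filter.atTop)
    -- SCO condition, part (ii): `f([v1; v2]) ≥ f([0; v2])`
    (hSCO2 : ∀ (v1 : Fin n → ℝ) (v2 : Fin n1 → ℝ), f (Sum.elim 0 v2) ≤ f (Sum.elim v1 v2))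
    -- SCO condition, part (iii): `h` is invariant under permutations of coordinates
    (hSCO3 : ∀ (π : Equiv.Perm (Fin p)) (β : Fin p → ℝ), h (β ∘ π) = h β) :
    ∃ (XO : Fin n1 → Fin p → ℝ) (yO : Fin n1 → ℝ) (βhat : Fin p → ℝ),
      h βhat = h βstar ∧
      (∀ j, βhat j ≠ 0 → βstar j = 0) ∧
      (∀ βtilde : Fin p → ℝ, (∀ j, βtilde j ≠ 0 → βstar j ≠ 0) →
        f (regResidual n n1 p XA e βstar XO yO βhat) <
          f (regResidual n n1 p XA e βstar XO yO βtilde)) ∧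
      (∀ R : ℝ, h βstar ≤ R →
        ∀ βtilde : Fin p → ℝ, (∀ j, βtilde j ≠ 0 → βstar j ≠ 0) → h βtilde ≤ R →
          ¬ IsMinOn (fun β => f (regResidual n n1 p XA e βstar XO yO β))
              {β | h β ≤ R} βtilde) :=
  stmt_0_general n n1 p k hn1 hk hp βstar hsupp XA e f h hSCO1 hSCO2 hSCO3
end

section
/- Let n, n1, k, p be positive integers with k ≥ 4, p ≥ k + 1, n1 ≤ n, and n1 ≥ 4n/(k+1). Let Λ* = {1,…,k}, and let β* ∈ ℝ^p have β*_j = 1 for j ∈ Λ* and 0 otherwise. Let X^A ∈ ℝ^{n×p}, e ∈ ℝ^n, and y^A = X^A β* + e. Define y^O ∈ ℝ^{n1} by y^O_i = √k, and X^O ∈ ℝ^{n1×p} by X^O_{i,k+1} = √k and X^O_{i,j} = 0 for j ≠ k+1. Let X = [X^A; X^O] ∈ ℝ^{(n+n1)×p}, y = [y^A; y^O] ∈ ℝ^{n+n1}, Ŝ = {n1+1, …, n+n1}, Λ̂ = {2, …, k+1}, θ̂ = (1,…,1) ∈ ℝ^k, and T = {n1+1, …, n}. Assume (i) ‖e + X^A_{Λ*}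 δ‖₂² ≥ (1 − 1/k) k for every δ ∈ ℝ^k, and (ii) ‖e_T + (X^A_{·,1})_T − (X^A_{·,k+1})_T‖₂² ≤ (1 + 1/k)(1 − n1/n)(k + 2), where v_T denotes the restriction of a vector to the coordinates in T and X^A_{·,j} the j-th column of X^A. Then for every set S ⊆ {1, …, n+n1} with |S| = n and every θ ∈ ℝ^k, ‖y_Ŝ − X_{Ŝ,Λ̂} θ̂‖₂ < ‖y_S − X_{S,Λ*} θ‖₂. In particular, no solution of the brute force problem with column set Λ* is optimal. -/
/-! The competing fit reproduces the `n1` outlier rows exactly, so its squared residual is the sum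
in (ii), which the lower bound on `n1` pushes below `k - 1`. A fit on `Λ*` puts no weight on the
outlier column (index `k` here, the paper's `k + 1`), so every outlier row it keeps costs exactly
`k`; and a set of `n` rows with no outlier is the whole inlier block, where (i) bounds the residual
below by `(1 - 1/k) k = k - 1`. -/

open Finset

theorem Finset.le_sum_of_card_eq_card_left {ι κ M : Type*} [Fintype ι] [AddCommMonoid M]
    [PartialOrder M] [IsOrderedAddMonoid M] {g : ι ⊕ κ → M} {c : M} (hg : ∀ r, 0 ≤ g r)
    (hinl : c ≤ ∑ i, g (Sum.inl i)) (hinr : ∀ b, c ≤ g (Sum.inr b)) {S : Finset (ι ⊕ κ)} (hS : #S = Fintype.card ι) :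
    c ≤ ∑ r ∈ S, g r := by
  rw [sum_sum_eq_sum_toLeft_add_sum_toRight]
  rcases S.toRight.eq_empty_or_nonempty with hR | ⟨b, hb⟩
  · have hL : S.toLeft = univ :=
      S.toLeft.eq_univ_of_card (by simpa [hR] using S.card_toLeft_add_card_toRight.trans hS)
    simpa [hL, hR] using hinl
  · calc c ≤ g (Sum.inr b) := hinr b
      _ ≤ ∑ x ∈ S.toRight, g (Sum.inr x) := single_le_sum (fun x _ => hg _) hb
      _ ≤ _ := le_add_of_nonneg_left (sum_nonneg fun x _ => hg _)

theorem Finset.sum_image_inl_union_image_inr {ι κ M : Type*} [DecidableEq ι] [DecidableEq κ]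
    [AddCommMonoid M] (s : Finset ι) (t : Finset κ) (f : ι ⊕ κ → M) :
    ∑ r ∈ s.image Sum.inl ∪ t.image Sum.inr, f r =
      ∑ i ∈ s, f (Sum.inl i) + ∑ b ∈ t, f (Sum.inr b) := by
  rw [← sum_disjSum]
  congr 1
  ext (_ | _) <;> simp

theorem ite_lt_sub_ite_Icc_eq (j k : ℕ) :
    ((if j < k then 1 else 0) - if 1 ≤ j ∧ j ≤ k then 1 else 0 : ℝ) =
      (if j = 0 then 1 else 0) - if j = k then 1 else 0 := by
  split_ifs <;> first | omega | norm_num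

theorem sum_mul_ite_lt_sub_sum_mul_ite_Icc {p k : ℕ} (hk : k < p) (x : Fin p → ℝ) :
    ∑ j : Fin p, x j * (if (j : ℕ) < k then 1 else 0) -
        ∑ j : Fin p, x j * (if 1 ≤ (j : ℕ) ∧ (j : ℕ) ≤ k then 1 else 0) =
      x ⟨0, by omega⟩ - x ⟨k, hk⟩ := by
  have hval (m : ℕ) (hm : m < p) (j : Fin p) : (j : ℕ) = m ↔ j = ⟨m, hm⟩ := by simp [Fin.ext_iff]
  simp_rw [← sum_sub_distrib, ← mul_sub, ite_lt_sub_ite_Icc_eq, hval 0 (by omega), hval k hk,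
    mul_sub, mul_ite, mul_one, mul_zero, sum_sub_distrib, sum_ite_eq', mem_univ, if_true]

theorem sum_ite_val_eq_mul {p k : ℕ} (hk : k < p) (c : ℝ) (w : Fin p → ℝ) :
    ∑ j : Fin p, (if (j : ℕ) = k then c else 0) * w j = c * w ⟨k, hk⟩ := by
  rw [Fintype.sum_eq_single ⟨k, hk⟩ fun j hj => by simp [Fin.ext_iff] at hj; simp [hj]]
  simp

theorem brute_force_margin {n n1 k : ℕ} (hk : 0 < k) (hn : 0 < n) (hn1 : 4 * n ≤ n1 * (k + 1)) :
    (1 + 1 / (k : ℝ)) * (1 - (n1 : ℝ) / n) * ((k : ℝ) + 2) < k - 1 := by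
  have hk' : (0 : ℝ) < k := by exact_mod_cast hk
  have hn' : (0 : ℝ) < n := by exact_mod_cast hn
  have h4 : (4 : ℝ) * n ≤ n1 * (k + 1) := by exact_mod_cast hn1
  rw [show (1 + 1 / (k : ℝ)) * (1 - (n1 : ℝ) / n) * ((k : ℝ) + 2) =
      (k + 1) * (n - n1) * (k + 2) / (k * n) by field_simp, div_lt_iff₀ (by positivity)]
  nlinarith

/-- deterministic core of the brute-force failure theorem.  With the specific
corruption `y^O_i = √k`, `X^O_{·,k+1} = √k e_{k+1}` (columns indexed from `1`; here `0`-indexed,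
so column `k`), and under the two norm bounds (i) and (ii), the alternative solution
`(θ̂ = 𝟙, Ŝ = {n1+1,…,n+n1}, Λ̂ = {2,…,k+1})` strictly beats every brute-force solution using
the true column set `Λ* = {1,…,k}`. -/
theorem stmt_10 (n n1 k p : ℕ) (hk : 4 ≤ k) (hp : k + 1 ≤ p) (hn : 0 < n)
    (hn1 : 4 * n ≤ n1 * (k + 1))
    (XA : Fin n → Fin p → ℝ) (e : Fin n → ℝ)
    (βstar : Fin p → ℝ) (hβstar : ∀ j : Fin p, βstar j = if (j : ℕ) < k then 1 else 0)
    (yO : Fin n1 → ℝ) (hyO : ∀ i, yO i = Real.sqrt k)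
    (XO : Fin n1 → Fin p → ℝ)
    (hXO : ∀ (i : Fin n1) (j : Fin p), XO i j = if (j : ℕ) = k then Real.sqrt k else 0)
    -- hypothesis (i): ‖e + X^A_{Λ*} δ‖₂² ≥ (1 − 1/k) k for every δ supported on Λ*
    (hi : ∀ δ : Fin p → ℝ, (∀ j : Fin p, δ j ≠ 0 → (j : ℕ) < k) →
      (1 - 1 / (k : ℝ)) * k ≤ ∑ i, (e i + ∑ j, XA i j * δ j) ^ 2)
    -- hypothesis (ii): ‖e_T + (X^A_{·,1})_T − (X^A_{·,k+1})_T‖₂² ≤ (1 + 1/k)(1 − n1/n)(k + 2)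
    (hii : ∑ i ∈ Finset.univ.filter (fun i : Fin n => n1 ≤ (i : ℕ)),
        (e i + XA i ⟨0, by omega⟩ - XA i ⟨k, by omega⟩) ^ 2 ≤
      (1 + 1 / (k : ℝ)) * (1 - (n1 : ℝ) / n) * ((k : ℝ) + 2)) :
    ∀ S : Finset (Fin n ⊕ Fin n1), S.card = n →
      ∀ βtilde : Fin p → ℝ, (∀ j : Fin p, βtilde j ≠ 0 → (j : ℕ) < k) →
        Real.sqrt (∑ r ∈ ((Finset.univ.filter fun i : Fin n => n1 ≤ (i : ℕ)).image Sum.inl ∪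
              Finset.univ.image Sum.inr),
            (Sum.elim (fun i => (∑ j, XA i j * βstar j) + e i) yO r -
              ∑ j, Sum.elim XA XO r j *
                (if 1 ≤ (j : ℕ) ∧ (j : ℕ) ≤ k then (1 : ℝ) else 0)) ^ 2) <
          Real.sqrt (∑ r ∈ S,
            (Sum.elim (fun i => (∑ j, XA i j * βstar j) + e i) yO r -
              ∑ j, Sum.elim XA XO r j * βtilde j) ^ 2) := by
  intro S hS β hβ
  obtain rfl : βstar = _ := funext hβstar
  obtain rfl : yO = _ := funext hyO
  obtain rfl : XO = _ := funext fun i => funext (hXO i)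
  have hkp : k < p := by omega
  have hβk : β ⟨k, hkp⟩ = 0 := by_contra fun h => (hβ _ h).false
  refine Real.sqrt_lt_sqrt (sum_nonneg fun _ _ => sq_nonneg _) ?_
  calc _ = ∑ i ∈ univ.filter (fun i : Fin n => n1 ≤ (i : ℕ)),
          (e i + XA i ⟨0, by omega⟩ - XA i ⟨k, hkp⟩) ^ 2 := by
        rw [sum_image_inl_union_image_inr]
        simp only [Sum.elim_inl, Sum.elim_inr, sum_ite_val_eq_mul hkp,
          if_pos (⟨by omega, le_rfl⟩ : 1 ≤ k ∧ k ≤ k), mul_one, sub_self, zero_pow two_ne_zero,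
          sum_const_zero, add_zero]
        refine sum_congr rfl fun i _ => ?_
        congr 1
        linear_combination sum_mul_ite_lt_sub_sum_mul_ite_Icc hkp (XA i)
    _ ≤ _ := hii
    _ < k - 1 := brute_force_margin (by omega) hn hn1
    _ ≤ _ := by
        refine le_sum_of_card_eq_card_left (fun _ => sq_nonneg _) ?_ ?_ (by simpa using hS)
        · have hδ (j : Fin p) (hj : (if (j : ℕ) < k then 1 else 0) - β j ≠ 0) : (j : ℕ) < k :=
            by_contra fun hjk => hj (by simp [hjk, not_imp_comm.mp (hβ j) hjk])
          calc (k : ℝ) - 1 = (1 - 1 / (k : ℝ)) * k := by field_simp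
            _ ≤ _ := hi _ hδ
            _ = _ := sum_congr rfl fun i _ => by
              simp only [Sum.elim_inl, mul_sub, sum_sub_distrib]
              ring
        · intro b
          simp only [Sum.elim_inr, sum_ite_val_eq_mul hkp, hβk, mul_zero, sub_zero,
            Real.sq_sqrt k.cast_nonneg]
          linarith
end

section
/- Let N and n1 be integers with 0 ≤ n1 ≤ N, let a, b ∈ ℝ^N, and let A ⊆ {1,…,N} be a nonempty set with |{1,…,N} \ A| ≤ n1. Let h = Σ_{i∈Ω} a_i b_i be a trimmed inner product of a and b with parameter n1, i.e., Ω ⊆ {1,…,N} with |Ω| = N − n1 and |a_i b_i| ≤ |a_j b_j| for every i ∈ Ω and j ∉ Ω. Then | h − Σ_{i∈A} a_i b_i | ≤ 2 n1 · max_{i∈A} |a_i b_i|. -/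
/-! Write the deviation as `∑_{Ω \ A} - ∑_{A \ Ω}`. Every term over `A \ Ω` is bounded by the
maximum `M` over `A`. Since `|Ω| ≤ |A|`, the set `Ω \ A` is no larger than `A \ Ω`, and if it is
nonempty then so is `A \ Ω`; trimming bounds each term over `Ω \ A` by some term over `A \ Ω`,
hence again by `M`. Both pieces have at most `|A \ Ω| ≤ |Ωᶜ| ≤ n1` terms. -/

open Finset

section TrimmedSum

variable {ι α : Type*} [AddCommGroup α] [LinearOrder α] [IsOrderedAddMonoid α]

lemma abs_sum_le_card_nsmul_of_forall_abs_le {s : Finset ι} {f : ι → α} {M : α}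
    (h : ∀ i ∈ s, |f i| ≤ M) : |∑ i ∈ s, f i| ≤ #s • M :=
  (abs_sum_le_sum_abs f s).trans (sum_le_card_nsmul s _ M h)

theorem abs_sum_sub_sum_le_of_trimmed [DecidableEq ι] {f : ι → α} {A Ω : Finset ι} {M : α} (hcard : #Ω ≤ #A)
    (htrim : ∀ i ∈ Ω, ∀ j ∉ Ω, |f i| ≤ |f j|) (hM : ∀ i ∈ A, |f i| ≤ M) :
    |∑ i ∈ Ω, f i - ∑ i ∈ A, f i| ≤ (2 * #(A \ Ω)) • M := by
  have hsdiff : #(Ω \ A) ≤ #(A \ Ω) := card_sdiff_le_card_sdiff_iff.mpr hcard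
  rw [← sum_sdiff_sub_sum_sdiff]
  rcases (A \ Ω).eq_empty_or_nonempty with hAΩ | ⟨j, hj⟩
  · have hΩA : Ω \ A = ∅ := card_eq_zero.mp (by simpa [hAΩ] using hsdiff)
    simp [hAΩ, hΩA]
  obtain ⟨hjA, hjΩ⟩ := mem_sdiff.mp hj
  have hΩA : ∀ i ∈ Ω \ A, |f i| ≤ M := fun i hi =>
    (htrim i (mem_sdiff.mp hi).1 j hjΩ).trans (hM j hjA)
  have hM₀ : 0 ≤ M := (abs_nonneg _).trans (hM j hjA)
  calc |∑ i ∈ Ω \ A, f i - ∑ i ∈ A \ Ω, f i|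
      ≤ |∑ i ∈ Ω \ A, f i| + |∑ i ∈ A \ Ω, f i| := abs_sub _ _
    _ ≤ #(Ω \ A) • M + #(A \ Ω) • M :=
        add_le_add (abs_sum_le_card_nsmul_of_forall_abs_le hΩA)
          (abs_sum_le_card_nsmul_of_forall_abs_le fun i hi => hM i (mem_sdiff.mp hi).1)
    _ ≤ (2 * #(A \ Ω)) • M := by
        rw [two_mul, add_nsmul]
        gcongr

end TrimmedSum

theorem stmt_12_general (N n1 : ℕ) (a b : Fin N → ℝ)
    (A : Finset (Fin N)) (hA : A.Nonempty) (hAc : (Finset.univ \ A).card ≤ n1)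
    (h : ℝ) (Om : Finset (Fin N)) (hOmcard : Om.card = N - n1)
    (hOmtrim : ∀ i ∈ Om, ∀ j, j ∉ Om → |a i * b i| ≤ |a j * b j|)
    (hsum : h = ∑ i ∈ Om, a i * b i) :
    |h - ∑ i ∈ A, a i * b i| ≤ 2 * n1 * A.sup' hA (fun i => |a i * b i|) := by
  set M := A.sup' hA fun i => |a i * b i|
  have hM : ∀ i ∈ A, |a i * b i| ≤ M := fun i hi => le_sup' (fun i => |a i * b i|) hi
  have hM₀ : 0 ≤ M := (abs_nonneg _).trans (hM _ hA.choose_spec)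
  have hcard : #Om ≤ #A := by
    rw [card_univ_sdiff, Fintype.card_fin] at hAc
    omega
  have hAOm : #(A \ Om) ≤ n1 :=
    calc #(A \ Om) ≤ #(univ \ Om) := card_le_card (sdiff_subset_sdiff (subset_univ A) le_rfl)
      _ = N - #Om := by rw [card_univ_sdiff, Fintype.card_fin]
      _ ≤ n1 := by omega
  subst hsum
  calc _ ≤ (2 * #(A \ Om)) • M := abs_sum_sub_sum_le_of_trimmed hcard hOmtrim hM
    _ ≤ (2 * n1) • M := nsmul_le_nsmul_left hM₀ (by omega)
    _ = 2 * n1 * M := by rw [nsmul_eq_mul]; push_cast; rfl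

/-- a trimmed inner product with parameter `n1` deviates from the inner product over
the authentic index set `A` (whose complement has at most `n1` elements) by at most
`2 n1 max_{i ∈ A} |a_i b_i|`. -/
theorem stmt_12 (N n1 : ℕ) (hn1 : n1 ≤ N) (a b : Fin N → ℝ)
    (A : Finset (Fin N)) (hA : A.Nonempty) (hAc : (Finset.univ \ A).card ≤ n1)
    (h : ℝ) (Om : Finset (Fin N)) (hOmcard : Om.card = N - n1)
    (hOmtrim : ∀ i ∈ Om, ∀ j, j ∉ Om → |a i * b i| ≤ |a j * b j|)
    (hsum : h = ∑ i ∈ Om, a i * b i) :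
    |h - ∑ i ∈ A, a i * b i| ≤ 2 * n1 * A.sup' hA (fun i => |a i * b i|) :=
  stmt_12_general N n1 a b A hA hAc h Om hOmcard hOmtrim hsum
end

section
/- Let p, k be positive integers with k ≤ p, let β ∈ ℝ^p have support Λ* with |Λ*| = k, let ε ≥ 0, and let h : {1,…,p} → ℝ satisfy |h(j) − β_j| ≤ ε for all j. Assume min_{j ∈ Λ*} |β_j| > 2ε. Then every set Λ̂ ⊆ {1,…,p} with |Λ̂| = k such that |h(j)| ≥ |h(j')| for all j ∈ Λ̂ and j' ∉ Λ̂ satisfies Λ̂ = Λ*. -/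
/-! Off the support `|h j| ≤ ε`, while on it `|h j| ≥ |β j| - ε > ε`; so `ε` separates the
support from its complement in the values of `|h|`, and a top set of the same cardinality
must be the support. -/

theorem Finset.eq_of_card_eq_of_isTop_of_strictSep {ι α : Type*} [LinearOrder α] {f : ι → α}
    {Λ S : Finset ι} (hcard : S.card = Λ.card)
    (htop : ∀ j ∈ Λ, ∀ j' ∉ Λ, f j' ≤ f j) (hsep : ∀ i ∈ S, ∀ i' ∉ S, f i' < f i) :
    Λ = S := by
  have hsub : S ⊆ Λ := by
    intro i hiS
    by_contra hiΛ
    obtain ⟨j, hjΛ, hjS⟩ : ∃ j ∈ Λ, j ∉ S := by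
      by_contra! hΛS
      exact hiΛ (Finset.eq_of_subset_of_card_le hΛS hcard.le ▸ hiS)
    exact (htop j hjΛ i hiΛ).not_gt (hsep i hiS j hjS)
  exact (Finset.eq_of_subset_of_card_le hsub hcard.ge).symm

theorem lt_abs_of_abs_sub_le {α : Type*} [Field α] [LinearOrder α] [IsStrictOrderedRing α]
    {a b ε : α} (hab : |a - b| ≤ ε) (hb : 2 * ε < |b|) : ε < |a| := by
  have := abs_sub_abs_le_abs_sub b a
  rw [abs_sub_comm] at this
  linarith

theorem stmt_13_general (p k : ℕ)
    (β : Fin p → ℝ) (ε : ℝ)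
    (hcard : (Finset.univ.filter fun j => β j ≠ 0).card = k)
    (h : Fin p → ℝ) (happrox : ∀ j, |h j - β j| ≤ ε)
    (hmin : ∀ j, β j ≠ 0 → 2 * ε < |β j|)
    (Λ : Finset (Fin p)) (hΛcard : Λ.card = k)
    (htop : ∀ j ∈ Λ, ∀ j', j' ∉ Λ → |h j'| ≤ |h j|) :
    Λ = Finset.univ.filter fun j => β j ≠ 0 := by
  refine Finset.eq_of_card_eq_of_isTop_of_strictSep (hcard.trans hΛcard.symm) htop ?_
  intro i hi i' hi'
  simp only [Finset.mem_filter, Finset.mem_univ, true_and, not_not] at hi hi'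
  calc |h i'| = |h i' - β i'| := by rw [hi', sub_zero]
    _ ≤ ε := happrox i'
    _ < |h i| := lt_abs_of_abs_sub_le (happrox i) (hmin i hi)

/-- if `h` approximates `β` uniformly within `ε` and every nonzero entry of `β`
exceeds `2ε` in absolute value, then any top-`k` set of `|h|` equals the support of `β`
(which is assumed to have exactly `k` elements). -/
theorem stmt_13 (p k : ℕ) (hk : 0 < k) (hkp : k ≤ p)
    (β : Fin p → ℝ) (ε : ℝ) (hε : 0 ≤ ε)
    (hcard : (Finset.univ.filter fun j => β j ≠ 0).card = k)
    (h : Fin p → ℝ) (happrox : ∀ j, |h j - β j| ≤ ε)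
    (hmin : ∀ j, β j ≠ 0 → 2 * ε < |β j|)
    (Λ : Finset (Fin p)) (hΛcard : Λ.card = k)
    (htop : ∀ j ∈ Λ, ∀ j', j' ∉ Λ → |h j'| ≤ |h j|) :
    Λ = Finset.univ.filter fun j => β j ≠ 0 :=
  stmt_13_general p k β ε hcard h happrox hmin Λ hΛcard htop
end

section
/- Let p, k be positive integers with k ≤ p, let β ∈ ℝ^p have support of size at most k, let 0 ≤ a < 1 and b ≥ 0, and let h : {1,…,p} → ℝ satisfy |h(j) − β_j| ≤ a|β_j| + b for all j. Let Λ̂ ⊆ {1,…,p} with |Λ̂| = k be such that |h(j)| ≥ |h(j')| for all j ∈ Λ̂ and j' ∉ Λ̂, and define β̂ ∈ ℝ^p by β̂_j = h(j) for j ∈ Λ̂ and β̂_j = 0 otherwise. Then ‖β̂ − β‖₂ ≤ a ‖β‖₂ + 4 √k · b / (1 − a). -/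
/-!
Put `c = 2b / (1 - a)`. An index `j` outside the top-`k` set `Λ` has `|β_j| ≤ c`: if `β_j ≠ 0`,
then, the support of `β` having at most `k = |Λ|` elements, some `i ∈ Λ` has `β_i = 0`, so
`|h j| ≤ |h i| ≤ b` and `(1 - a)|β_j| ≤ |h j| + b ≤ 2b`. Hence every coordinate of the error
`β̂ - β` is at most `a|β_j| + c` in absolute value and the `c` is only needed on `Λ ∪ supp β`,
a set of at most `2k` indices; Minkowski's inequality gives `a‖β‖₂ + c√(2k) ≤ a‖β‖₂ + 4√k b/(1-a)`.
-/

open Finset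

theorem Real.sqrt_sum_sq_le_of_abs_le_add {ι : Type*} [Fintype ι] (e u v : ι → ℝ)
    (h : ∀ j, |e j| ≤ u j + v j) :
    √(∑ j, e j ^ 2) ≤ √(∑ j, u j ^ 2) + √(∑ j, v j ^ 2) := by
  have hnorm (f : ι → ℝ) : √(∑ j, f j ^ 2) = ‖WithLp.toLp 2 f‖ := by
    simp [EuclideanSpace.norm_eq]
  calc √(∑ j, e j ^ 2) ≤ √(∑ j, (u + v) j ^ 2) := by
        gcongr √(∑ j, ?_) with j
        exact sq_le_sq.2 ((h j).trans (le_abs_self _))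
    _ = ‖WithLp.toLp 2 u + WithLp.toLp 2 v‖ := by rw [hnorm, WithLp.toLp_add]
    _ ≤ √(∑ j, u j ^ 2) + √(∑ j, v j ^ 2) := by rw [hnorm u, hnorm v]; exact norm_add_le _ _

theorem Real.sqrt_sum_sq_ite_mem {ι : Type*} [Fintype ι] [DecidableEq ι] (s : Finset ι) {c : ℝ}
    (hc : 0 ≤ c) : √(∑ j, (if j ∈ s then c else 0) ^ 2) = c * √(#s : ℝ) := by
  have hsum : ∑ j, (if j ∈ s then c else 0) ^ 2 = #s * c ^ 2 := by simp [ite_pow]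
  rw [hsum, Real.sqrt_mul' _ (sq_nonneg c), Real.sqrt_sq hc, mul_comm]

theorem abs_le_of_notMem_of_abs_le_abs {ι : Type*} [Fintype ι] {β h : ι → ℝ} {a b : ℝ}
    (ha1 : a < 1) (happrox : ∀ j, |h j - β j| ≤ a * |β j| + b) {Λ : Finset ι}
    (hcard : #{j | β j ≠ 0} ≤ #Λ) (htop : ∀ j ∈ Λ, ∀ j' ∉ Λ, |h j'| ≤ |h j|)
    {j : ι} (hj : j ∉ Λ) : |β j| ≤ 2 * b / (1 - a) := by
  classical
  rw [le_div_iff₀ (by linarith)]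
  by_cases hβj : β j = 0
  · simpa [hβj] using (abs_nonneg _).trans (happrox j)
  obtain ⟨i, hiΛ, hi⟩ : ∃ i ∈ Λ, i ∉ ({j | β j ≠ 0} : Finset ι).erase j :=
    exists_mem_notMem_of_card_lt_card
      ((card_erase_lt_of_mem (by simpa using hβj)).trans_le hcard)
  have hβi : β i = 0 := by
    have hij : i ≠ j := fun hij => hj (hij ▸ hiΛ)
    simpa [hij] using hi
  have hhi : |h i| ≤ b := by simpa [hβi] using happrox i
  have hhj : |h j| ≤ b := (htop i hiΛ j hj).trans hhi
  have hrev : |β j| - |h j| ≤ |h j - β j| := by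
    rw [abs_sub_comm]; exact abs_sub_abs_le_abs_sub _ _
  nlinarith [happrox j]

theorem abs_ite_mem_sub_le {ι : Type*} [Fintype ι] [DecidableEq ι] {β h : ι → ℝ} {a b : ℝ}
    (ha0 : 0 ≤ a) (ha1 : a < 1) (hb : 0 ≤ b) (happrox : ∀ j, |h j - β j| ≤ a * |β j| + b)
    {Λ : Finset ι} (hcard : #{j | β j ≠ 0} ≤ #Λ) (htop : ∀ j ∈ Λ, ∀ j' ∉ Λ, |h j'| ≤ |h j|)
    (j : ι) :
    |(if j ∈ Λ then h j else 0) - β j| ≤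
      a * |β j| + if j ∈ Λ ∪ ({j | β j ≠ 0} : Finset ι) then 2 * b / (1 - a) else 0 := by
  have hbc : b ≤ 2 * b / (1 - a) := by rw [le_div_iff₀ (by linarith)]; nlinarith
  by_cases hjΛ : j ∈ Λ
  · simpa [hjΛ] using (happrox j).trans (by linarith)
  by_cases hβj : β j = 0
  · simp only [hjΛ, hβj, if_false, sub_zero, abs_zero, mul_zero, zero_add]
    split_ifs <;> linarith
  have hjS : j ∈ Λ ∪ ({j | β j ≠ 0} : Finset ι) := by simp [hβj]
  rw [if_neg hjΛ, if_pos hjS, zero_sub, abs_neg]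
  linarith [abs_le_of_notMem_of_abs_le_abs ha1 happrox hcard htop hjΛ,
    mul_nonneg ha0 (abs_nonneg (β j))]

theorem stmt_14_general (p k : ℕ)
    (β : Fin p → ℝ) (hcard : (Finset.univ.filter fun j => β j ≠ 0).card ≤ k)
    (a b : ℝ) (ha0 : 0 ≤ a) (ha1 : a < 1) (hb : 0 ≤ b)
    (h : Fin p → ℝ) (happrox : ∀ j, |h j - β j| ≤ a * |β j| + b)
    (Λ : Finset (Fin p)) (hΛcard : Λ.card = k)
    (htop : ∀ j ∈ Λ, ∀ j', j' ∉ Λ → |h j'| ≤ |h j|)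
    (βhat : Fin p → ℝ) (hβhat : βhat = fun j => if j ∈ Λ then h j else 0) :
    Real.sqrt (∑ j, (βhat j - β j) ^ 2) ≤
      a * Real.sqrt (∑ j, (β j) ^ 2) + 4 * Real.sqrt k * b / (1 - a) := by
  subst hβhat
  set c := 2 * b / (1 - a)
  have h1a : 0 < 1 - a := by linarith
  set S := Λ ∪ ({j | β j ≠ 0} : Finset (Fin p))
  have hc : 0 ≤ c := by positivity
  have hcardS : √(#S : ℝ) ≤ 2 * √k := by
    rw [Real.sqrt_le_iff, mul_pow, Real.sq_sqrt k.cast_nonneg]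
    refine ⟨by positivity, ?_⟩
    have : #S ≤ k + k := (card_union_le _ _).trans (add_le_add hΛcard.le hcard)
    exact_mod_cast (by omega : #S ≤ 4 * k)
  calc √(∑ j, ((if j ∈ Λ then h j else 0) - β j) ^ 2)
      ≤ √(∑ j, (a * |β j|) ^ 2) + √(∑ j, (if j ∈ S then c else 0) ^ 2) :=
        Real.sqrt_sum_sq_le_of_abs_le_add _ _ _
          (abs_ite_mem_sub_le ha0 ha1 hb happrox (hΛcard ▸ hcard) htop)
    _ = a * √(∑ j, β j ^ 2) + c * √(#S : ℝ) := by
        rw [Real.sqrt_sum_sq_ite_mem S hc]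
        simp only [mul_pow, sq_abs, ← mul_sum]
        rw [Real.sqrt_mul' _ (sum_nonneg fun j _ => sq_nonneg (β j)), Real.sqrt_sq ha0]
    _ ≤ a * √(∑ j, β j ^ 2) + c * (2 * √k) := by gcongr
    _ = a * √(∑ j, β j ^ 2) + 4 * √k * b / (1 - a) := by ring

/-- deterministic ℓ₂ error bound for the hard-thresholded estimator built from
approximate coefficients `h(j)` with `|h(j) − β_j| ≤ a|β_j| + b`, using a top-`k` index set. -/
theorem stmt_14 (p k : ℕ) (hk : 0 < k) (hkp : k ≤ p)
    (β : Fin p → ℝ) (hcard : (Finset.univ.filter fun j => β j ≠ 0).card ≤ k)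
    (a b : ℝ) (ha0 : 0 ≤ a) (ha1 : a < 1) (hb : 0 ≤ b)
    (h : Fin p → ℝ) (happrox : ∀ j, |h j - β j| ≤ a * |β j| + b)
    (Λ : Finset (Fin p)) (hΛcard : Λ.card = k)
    (htop : ∀ j ∈ Λ, ∀ j', j' ∉ Λ → |h j'| ≤ |h j|)
    (βhat : Fin p → ℝ) (hβhat : βhat = fun j => if j ∈ Λ then h j else 0) :
    Real.sqrt (∑ j, (βhat j - β j) ^ 2) ≤
      a * Real.sqrt (∑ j, (β j) ^ 2) + 4 * Real.sqrt k * b / (1 - a) :=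
  stmt_14_general p k β hcard a b ha0 ha1 hb h happrox Λ hΛcard htop βhat hβhat
end
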